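/- Let λ, μ > 0 with ρ = λ/μ < 1, let i ≥ 0 and j ≥ 1 be integers. Then the function t ↦ p_{ij}(t) defined by the explicit integral formula is differentiable on (0, ∞) and satisfies the Kolmogorov forward equation d/dt p_{ij}(t) = λ·p_{i,j−1}(t) + μ·p_{i,j+1}(t) − (λ+μ)·p_{ij}(t) for all t > 0, where p_{ij}(t) = (2/π)·ρ^{(j−i)/2}·∫₀^π e^{−μ t γ(y)}/γ(y) · a_i(y)·a_j(y) dy + (1−ρ)·ρ^j. -/

import Mathlib

open Real MeasureTheory Set Filter

/-- γ(y) = 1 + ρ − 2√ρ·cos(y). -/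
noncomputable def gam (ρ y : ℝ) : ℝ := 1 + ρ - 2 * Real.sqrt ρ * Real.cos y

/-- a_k(y) = sin(k·y) − √ρ·sin((k+1)·y). -/
noncomputable def aco (ρ : ℝ) (k : ℕ) (y : ℝ) : ℝ :=
  Real.sin ((k : ℝ) * y) - Real.sqrt ρ * Real.sin (((k : ℝ) + 1) * y)

/-- Transient expected queue length of an M/M/1 queue started with `i` customers. -/
noncomputable def EL (lam mu : ℝ) (i : ℕ) (t : ℝ) : ℝ :=
  (2 / Real.pi) * (lam / mu) ^ ((1 - (i : ℝ)) / 2) *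
    (∫ y in (0 : ℝ)..Real.pi,
      Real.exp (-(mu * t * gam (lam / mu) y)) / (gam (lam / mu) y) ^ 2 *
        (aco (lam / mu) i y * Real.sin y)) +
  (lam / mu) / (1 - lam / mu)

/-- Transient probability that an M/M/1 queue started with `i` customers has `j` at time `t`. -/
noncomputable def pq (lam mu : ℝ) (i j : ℕ) (t : ℝ) : ℝ :=
  (2 / Real.pi) * (lam / mu) ^ (((j : ℝ) - (i : ℝ)) / 2) *
    (∫ y in (0 : ℝ)..Real.pi,
      Real.exp (-(mu * t * gam (lam / mu) y)) / gam (lam / mu) y *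
        (aco (lam / mu) i y * aco (lam / mu) j y)) +
  (1 - lam / mu) * (lam / mu) ^ j

/-- Erlang(n) density with rate `mu`: f_n(t) = μⁿ t^{n−1} e^{−μt}/(n−1)!. -/
noncomputable def erl (mu : ℝ) (n : ℕ) (t : ℝ) : ℝ :=
  mu ^ n * t ^ (n - 1) * Real.exp (-(mu * t)) / (Nat.factorial (n - 1) : ℝ)

/-- Expected total time to complete queue with `a` customers first, then queue with `b`. -/
noncomputable def ETT (lam mu : ℝ) (a b : ℕ) : ℝ :=
  ((a : ℝ) + 2) / mu + (1 / mu) * ∫ t in Set.Ioi (0 : ℝ), erl mu (a + 1) t * EL lam mu b t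

/-!
Each `a_k` satisfies `√ρ a_k + √ρ a_{k+2} - (1 + ρ) a_{k+1} = -γ a_{k+1}`, from
`sin (x - y) + sin (x + y) = 2 cos y sin x`. Because of the factor `ρ^{(j-i)/2}` and `λ = μρ`, the
forward operator in `j` therefore multiplies the integrand of `p_{ij}` by `-μγ`, which is exactly what
differentiating `e^{-μtγ}` in `t` does; the stationary part `(1 - ρ) ρ^j` is annihilated by it.
-/

lemma gam_pos {r : ℝ} (hr_nonneg : 0 ≤ r) (hr1 : r ≠ 1) (y : ℝ) : 0 < gam r y := by
  have hsqrt : Real.sqrt r ≠ 1 := by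
    rwa [Ne, Real.sqrt_eq_one]
  have hsq : Real.sqrt r * Real.sqrt r = r := Real.mul_self_sqrt hr_nonneg
  have hcos : Real.sqrt r * Real.cos y ≤ Real.sqrt r :=
    mul_le_of_le_one_right (Real.sqrt_nonneg r) (Real.cos_le_one y)
  have hgap : 0 < (1 - Real.sqrt r) ^ 2 := by
    have : 1 - Real.sqrt r ≠ 0 := sub_ne_zero.mpr (Ne.symm hsqrt)
    positivity
  -- γ(y) = (1 - √ρ)² + 2√ρ (1 - cos y)
  unfold gam
  nlinarith

@[fun_prop]
lemma continuous_gam (r : ℝ) : Continuous (gam r) := by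
  unfold gam; fun_prop

@[fun_prop]
lemma continuous_aco (r : ℝ) (k : ℕ) : Continuous (aco r k) := by
  unfold aco; fun_prop

lemma aco_add_aco_add_two (r : ℝ) (k : ℕ) (y : ℝ) :
    aco r k y + aco r (k + 2) y = 2 * Real.cos y * aco r (k + 1) y := by
  have hsin : ∀ n : ℝ, Real.sin (n * y) + Real.sin ((n + 2) * y) =
      2 * Real.cos y * Real.sin ((n + 1) * y) := fun n => by
    rw [show n * y = (n + 1) * y - y by ring, show (n + 2) * y = (n + 1) * y + y by ring,
      Real.sin_sub, Real.sin_add]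
    ring
  have h0 := hsin k
  have h1 := hsin (k + 1)
  simp only [aco]
  push_cast
  ring_nf at h0 h1 ⊢
  linear_combination h0 - Real.sqrt r * h1

lemma aco_three_term (r : ℝ) (k : ℕ) (y : ℝ) :
    Real.sqrt r * aco r k y + Real.sqrt r * aco r (k + 2) y - (1 + r) * aco r (k + 1) y =
      -(gam r y * aco r (k + 1) y) := by
  have h := aco_add_aco_add_two r k y
  unfold gam
  linear_combination Real.sqrt r * h

theorem hasDerivAt_intervalIntegral_exp_mul {g h : ℝ → ℝ} (hg : Continuous g)
    (hh : Continuous h) (a b t : ℝ) :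
    HasDerivAt (fun s => ∫ y in a..b, Real.exp (s * g y) * h y)
      (∫ y in a..b, g y * Real.exp (t * g y) * h y) t := by
  have hbound : ∀ y, ∀ s ∈ Metric.ball t 1,
      ‖g y * Real.exp (s * g y) * h y‖ ≤ |g y| * Real.exp ((|t| + 1) * |g y|) * |h y| := by
    intro y s hs
    have hs' : |s| ≤ |t| + 1 := by
      have := abs_sub_abs_le_abs_sub s t
      rw [Metric.mem_ball, Real.dist_eq] at hs
      linarith
    have hexp : Real.exp (s * g y) ≤ Real.exp ((|t| + 1) * |g y|) := by
      refine Real.exp_le_exp.mpr ((le_abs_self _).trans ?_)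
      rw [abs_mul]
      exact mul_le_mul_of_nonneg_right hs' (abs_nonneg _)
    rw [Real.norm_eq_abs, abs_mul, abs_mul, abs_of_pos (Real.exp_pos _)]
    gcongr
  refine (intervalIntegral.hasDerivAt_integral_of_dominated_loc_of_deriv_le
    (bound := fun y => |g y| * Real.exp ((|t| + 1) * |g y|) * |h y|)
    (Metric.ball_mem_nhds t one_pos)
    (Eventually.of_forall fun s => (by fun_prop : Continuous _).aestronglyMeasurable)
    ((by fun_prop : Continuous _).intervalIntegrable a b)
    ((by fun_prop : Continuous _).aestronglyMeasurable)
    (Eventually.of_forall fun y _ => hbound y)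
    ((by fun_prop : Continuous _).intervalIntegrable a b)
    (Eventually.of_forall fun y _ s _ => ?_)).2
  exact (((hasDerivAt_id' s).mul_const (g y)).exp.mul_const (h y)).congr_deriv (by ring)

noncomputable def pqIntegral (mu r : ℝ) (i j : ℕ) (t : ℝ) : ℝ :=
  ∫ y in (0 : ℝ)..Real.pi,
    Real.exp (-(mu * t * gam r y)) / gam r y * (aco r i y * aco r j y)

lemma pq_eq_pqIntegral (lam mu : ℝ) (i j : ℕ) (t : ℝ) :
    pq lam mu i j t = 2 / Real.pi * (lam / mu) ^ (((j : ℝ) - i) / 2) * pqIntegral mu (lam / mu) i j t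
      + (1 - lam / mu) * (lam / mu) ^ j := rfl

section PqIntegral

variable (mu : ℝ) {r : ℝ} (hγ : ∀ y, gam r y ≠ 0) (i : ℕ) (t : ℝ)
include hγ

lemma hasDerivAt_pqIntegral (j : ℕ) :
    HasDerivAt (pqIntegral mu r i j)
      (-mu * ∫ y in (0 : ℝ)..Real.pi,
        Real.exp (-(mu * t * gam r y)) * (aco r i y * aco r j y)) t := by
  have hcont : Continuous fun y => aco r i y * aco r j y / gam r y := by
    fun_prop (disch := exact hγ)
  have hfun : pqIntegral mu r i j = fun s => ∫ y in (0 : ℝ)..Real.pi,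
      Real.exp (s * -(mu * gam r y)) * (aco r i y * aco r j y / gam r y) := by
    funext s
    refine intervalIntegral.integral_congr fun y _ => ?_
    ring_nf
  rw [hfun, ← intervalIntegral.integral_const_mul]
  refine (hasDerivAt_intervalIntegral_exp_mul
    (by fun_prop : Continuous fun y => -(mu * gam r y)) hcont 0 Real.pi t).congr_deriv
    (intervalIntegral.integral_congr fun y _ => ?_)
  have := hγ y
  field_simp

lemma pqIntegral_three_term (k : ℕ) :
    Real.sqrt r * pqIntegral mu r i k t + Real.sqrt r * pqIntegral mu r i (k + 2) t
        - (1 + r) * pqIntegral mu r i (k + 1) t =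
      -∫ y in (0 : ℝ)..Real.pi,
        Real.exp (-(mu * t * gam r y)) * (aco r i y * aco r (k + 1) y) := by
  have hint : ∀ (c : ℝ) (j : ℕ), IntervalIntegrable
      (fun y => c * (Real.exp (-(mu * t * gam r y)) / gam r y * (aco r i y * aco r j y)))
      volume 0 Real.pi := fun c j =>
    (by fun_prop (disch := exact hγ) : Continuous _).intervalIntegrable _ _
  simp only [pqIntegral]
  rw [← intervalIntegral.integral_const_mul, ← intervalIntegral.integral_const_mul,
    ← intervalIntegral.integral_const_mul, ← intervalIntegral.integral_add (hint _ k) (hint _ (k + 2)),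
    ← intervalIntegral.integral_sub ((hint _ k).add (hint _ (k + 2))) (hint _ (k + 1)),
    ← intervalIntegral.integral_neg]
  refine intervalIntegral.integral_congr fun y _ => ?_
  have := hγ y
  linear_combination (norm := (field_simp; ring))
    Real.exp (-(mu * t * gam r y)) / gam r y * aco r i y * aco_three_term r k y

end PqIntegral

/-- Kolmogorov forward equation for j ≥ 1:
d/dt p_{ij}(t) = λ·p_{i,j−1}(t) + μ·p_{i,j+1}(t) − (λ+μ)·p_{ij}(t) on (0,∞). -/
theorem pq_kolmogorov_forward (lam mu : ℝ) (hlam : 0 < lam) (hmu : 0 < mu)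
    (hρ : lam / mu < 1) (i j : ℕ) (hj : 1 ≤ j) :
    ∀ t : ℝ, 0 < t →
      HasDerivAt (fun s : ℝ => pq lam mu i j s)
        (lam * pq lam mu i (j - 1) t + mu * pq lam mu i (j + 1) t
          - (lam + mu) * pq lam mu i j t) t := by
  intro t _
  obtain ⟨k, rfl⟩ : ∃ k, j = k + 1 := ⟨j - 1, by omega⟩
  simp only [pq_eq_pqIntegral, Nat.add_sub_cancel]
  set r := lam / mu with hr
  have hr_pos : 0 < r := div_pos hlam hmu
  have hlam_eq : lam = mu * r := by rw [hr]; field_simp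
  have hγ : ∀ y, gam r y ≠ 0 := fun y => (gam_pos hr_pos.le hρ.ne y).ne'
  have hsqrt : Real.sqrt r * Real.sqrt r = r := Real.mul_self_sqrt hr_pos.le
  set c := r ^ (((k : ℝ) - i) / 2)
  have hpow1 : r ^ (((k : ℝ) + 1 - i) / 2) = c * Real.sqrt r := by
    rw [Real.sqrt_eq_rpow, ← Real.rpow_add hr_pos]
    ring_nf
  have hpow2 : r ^ (((k : ℝ) + 1 + 1 - i) / 2) = c * r := by
    rw [← Real.rpow_add_one hr_pos.ne']
    ring_nf
  have hderiv := ((hasDerivAt_pqIntegral mu hγ i t (k + 1)).const_mul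
    (2 / Real.pi * r ^ ((((k + 1 : ℕ) : ℝ) - i) / 2))).add_const ((1 - r) * r ^ (k + 1))
  refine hderiv.congr_deriv ?_
  push_cast
  rw [hpow1, hpow2]
  -- with `λ = μρ` the stationary terms cancel and the integral terms combine into the three-term sum
  linear_combination -(2 / Real.pi * c * Real.sqrt r * mu) * pqIntegral_three_term mu hγ i t k
    + (2 / Real.pi * c * mu * (pqIntegral mu r i k t + pqIntegral mu r i (k + 2) t)) * hsqrt
    + (2 / Real.pi * c * (Real.sqrt r * pqIntegral mu r i (k + 1) t - pqIntegral mu r i k t)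
      + (1 - r) * (r ^ (k + 1) - r ^ k)) * hlam_eq
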